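/- Let K be a small category, F : K ⥤ K an endofunctor, and O an object of K. The commutative square of categories and functors with vertices F-Mly, the costructured arrow category (F ↓ O) (objects: pairs (E, s : F(E) ⟶ O)), the category Alg(F) of F-algebras, and K — where F-Mly → (F ↓ O) sends (E,d,s) to (E,s), F-Mly → Alg(F) sends (E,d,s) to the algebra (E,d), (F ↓ O) → K and Alg(F) → K are the forgetful functors — is a pullback square in the category Cat of small categories: F-Mly is isomorphic to the strict fiber product of Alg(F) → K ← (F ↓ O). -/

import Mathlib

/-! A cone over `Alg(F) → K ← (F ↓ O)` gives, at each object, an algebra and an output map whose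
carriers agree only up to a propositional equality; transporting the output map along it
(`eqToHom`) yields the Mealy machine. Uniqueness holds because `toAlgebra` is faithful and a
machine is determined by its two projections. -/

open CategoryTheory Limits

universe u

/-- An `F`-Mealy machine with output `O`: a carrier `E` with maps `d : F E ⟶ E`
and `s : F E ⟶ O`. -/
structure FMealy {K : Type u} [SmallCategory K] (F : K ⥤ K) (O : K) : Type u where
  E : K
  d : F.obj E ⟶ E
  s : F.obj E ⟶ O

namespace FMealy

variable {K : Type u} [SmallCategory K] {F : K ⥤ K} {O : K}

/-- A morphism of `F`-Mealy machines. -/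
@[ext]
structure Hom (M N : FMealy F O) : Type u where
  f : M.E ⟶ N.E
  hd : M.d ≫ f = F.map f ≫ N.d
  hs : M.s = F.map f ≫ N.s

instance : Category (FMealy F O) where
  Hom := Hom
  id M := ⟨𝟙 M.E, by simp, by simp⟩
  comp u v := ⟨u.f ≫ v.f, by
      rw [F.map_comp, Category.assoc, ← v.hd, ← Category.assoc, u.hd, Category.assoc], by
      rw [F.map_comp, Category.assoc, ← v.hs, u.hs]⟩
  id_comp u := Hom.ext (Category.id_comp u.f)
  comp_id u := Hom.ext (Category.comp_id u.f)
  assoc u v w := Hom.ext (Category.assoc u.f v.f w.f)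

/-- The projection of an `F`-Mealy machine to its output datum, an object of the
costructured arrow category `(F ↓ O)`. -/
def toCostructured (F : K ⥤ K) (O : K) : FMealy F O ⥤ CostructuredArrow F O where
  obj M := CostructuredArrow.mk M.s
  map {M N} u := CostructuredArrow.homMk u.f (by simpa using u.hs.symm)

/-- The projection of an `F`-Mealy machine to its underlying `F`-algebra. -/
def toAlgebra (F : K ⥤ K) (O : K) : FMealy F O ⥤ Endofunctor.Algebra F where
  obj M := ⟨M.E, M.d⟩
  map {M N} u := ⟨u.f, u.hd.symm⟩

end FMealy

lemma CategoryTheory.Functor.ext_of_comp_faithful {C D E : Type*} [Category C] [Category D]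
    [Category E] {G G' : C ⥤ D} (P : D ⥤ E) [P.Faithful] (hobj : ∀ x, G.obj x = G'.obj x)
    (h : G ⋙ P = G' ⋙ P) : G = G' :=
  Functor.ext hobj fun _ _ u =>
    P.map_injective (by simpa [eqToHom_map] using Functor.congr_hom h u)

namespace FMealy

variable {K : Type u} [SmallCategory K] {F : K ⥤ K} {O : K}

instance : (toAlgebra F O).Faithful where
  map_injective h := Hom.ext (congrArg Endofunctor.Algebra.Hom.f h)

lemma ext_of_toCostructured_of_toAlgebra {M N : FMealy F O}
    (hC : (toCostructured F O).obj M = (toCostructured F O).obj N)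
    (hA : (toAlgebra F O).obj M = (toAlgebra F O).obj N) : M = N := by
  obtain ⟨E, d, s⟩ := M
  obtain ⟨E', d', s'⟩ := N
  obtain ⟨rfl, hd⟩ := Endofunctor.Algebra.mk.inj hA
  obtain rfl := eq_of_heq hd
  obtain rfl : s = s' := eq_of_heq (congr_arg_heq Comma.hom hC)
  rfl

def ofCostructuredAlgebra (A : CostructuredArrow F O) (B : Endofunctor.Algebra F)
    (h : B.a = A.left) : FMealy F O :=
  ⟨B.a, B.str, F.map (eqToHom h) ≫ A.hom⟩

def homOfCostructuredAlgebra {A A' : CostructuredArrow F O} {B B' : Endofunctor.Algebra F}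
    {h : B.a = A.left} {h' : B'.a = A'.left} (g : A ⟶ A') (f : B ⟶ B')
    (hg : g.left = eqToHom h.symm ≫ f.f ≫ eqToHom h') :
    ofCostructuredAlgebra A B h ⟶ ofCostructuredAlgebra A' B' h' where
  f := f.f
  hd := f.h.symm
  hs := by
    dsimp only [ofCostructuredAlgebra]
    rw [← CostructuredArrow.w g, hg]
    simp

lemma toCostructured_obj_ofCostructuredAlgebra (A : CostructuredArrow F O)
    (B : Endofunctor.Algebra F) (h : B.a = A.left) :
    (toCostructured F O).obj (ofCostructuredAlgebra A B h) = A :=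
  CostructuredArrow.obj_ext _ _ h rfl

variable {X : Type*} [Category X] (G : X ⥤ CostructuredArrow F O) (H : X ⥤ Endofunctor.Algebra F)
  (w : G ⋙ CostructuredArrow.proj F O = H ⋙ Endofunctor.Algebra.forget F)

def lift : X ⥤ FMealy F O where
  obj x := ofCostructuredAlgebra (G.obj x) (H.obj x) (Functor.congr_obj w x).symm
  map u := homOfCostructuredAlgebra (G.map u) (H.map u) (Functor.congr_hom w u)

lemma lift_comp_toAlgebra : lift G H w ⋙ toAlgebra F O = H := rfl

lemma lift_comp_toCostructured : lift G H w ⋙ toCostructured F O = G :=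
  Functor.ext_of_comp_faithful (CostructuredArrow.proj F O)
    (fun _ => toCostructured_obj_ofCostructuredAlgebra _ _ _) w.symm

lemma eq_lift {m : X ⥤ FMealy F O} (hC : m ⋙ toCostructured F O = G)
    (hA : m ⋙ toAlgebra F O = H) : m = lift G H w :=
  Functor.ext_of_comp_faithful (toAlgebra F O)
    (fun x => ext_of_toCostructured_of_toAlgebra
      (Functor.congr_obj (hC.trans (lift_comp_toCostructured G H w).symm) x)
      (Functor.congr_obj hA x))
    hA

end FMealy

/-- The square exhibiting the category of `F`-Mealy machines with output `O` as the
strict fiber product of `Alg(F) → K ← (F ↓ O)` is a pullback square in `Cat`. -/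
theorem fMealy_isPullback_in_Cat
    {K : Type u} [SmallCategory K] (F : K ⥤ K) (O : K) :
    IsPullback (C := Cat.{u, u})
      (P := Cat.of (FMealy F O)) (X := Cat.of (CostructuredArrow F O))
      (Y := Cat.of (Endofunctor.Algebra F)) (Z := Cat.of K)
      (FMealy.toCostructured F O).toCatHom (FMealy.toAlgebra F O).toCatHom
      (CostructuredArrow.proj F O).toCatHom (Endofunctor.Algebra.forget F).toCatHom := by
  have w (s : PullbackCone (CostructuredArrow.proj F O).toCatHom
      (Endofunctor.Algebra.forget F).toCatHom) :
      s.fst.toFunctor ⋙ CostructuredArrow.proj F O =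
        s.snd.toFunctor ⋙ Endofunctor.Algebra.forget F :=
    congrArg Cat.Hom.toFunctor s.condition
  exact IsPullback.of_isLimit' ⟨rfl⟩ (PullbackCone.IsLimit.mk _
    (fun s => (FMealy.lift _ _ (w s)).toCatHom)
    (fun s => Cat.Hom.ext (FMealy.lift_comp_toCostructured _ _ (w s)))
    (fun s => Cat.Hom.ext (FMealy.lift_comp_toAlgebra _ _ (w s)))
    (fun s _ hC hA => Cat.Hom.ext (FMealy.eq_lift _ _ (w s)
      (congrArg Cat.Hom.toFunctor hC) (congrArg Cat.Hom.toFunctor hA))))
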